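/- Let F be a finite field with m elements and let n ≥ 2 be an integer. The set of nonzero non-main eigenvalues of the zero-divisor graph Γ(R_n) (real numbers λ ≠ 0 that are eigenvalues of the adjacency matrix of Γ(R_n) in whose eigenspace every eigenvector has coordinate sum zero) equals the set {−μ : μ is a main eigenvalue of Γ'(R_n)}. -/

import Mathlib

attribute [local instance] Classical.propDecidable

open Matrix

/-- Generalized Fibonacci sequence: `F_{α,0} = 1`, `F_{α,1} = 1`,
`F_{α,k} = F_{α,k-1} + (α-1)·F_{α,k-2}`. -/
noncomputable def genFib (α : ℝ) : ℕ → ℝ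
  | 0 => 1
  | 1 => 1
  | k + 2 => genFib α (k + 1) + (α - 1) * genFib α k

/-- Walk matrix of an `r × r` real matrix `B`: columns `e, B e, B² e, …, B^{r-1} e`. -/
noncomputable def walkMatrix {r : ℕ} (B : Matrix (Fin r) (Fin r) ℝ) :
    Matrix (Fin r) (Fin r) ℝ :=
  fun i k => ((B ^ (k : ℕ)) *ᵥ (fun _ => (1 : ℝ))) i

/-- The Pascal-type quotient matrix `P[m,n]`, indexed by `1, …, n-1` (here `i ↦ i.val + 1`):
`(i,j)`-entry is `C(i, n-j)·(m-1)^{n-j}` if `i + j ≥ n`, else `0`. -/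
noncomputable def Pmat (m n : ℕ) : Matrix (Fin (n - 1)) (Fin (n - 1)) ℝ :=
  fun i j =>
    if n ≤ (i.val + 1) + (j.val + 1) then
      (Nat.choose (i.val + 1) (n - (j.val + 1)) : ℝ) * ((m : ℝ) - 1) ^ (n - (j.val + 1))
    else 0

/-- The Pascal-type quotient matrix `Q[m,n]`, indexed by `1, …, n-1` (here `i ↦ i.val + 1`):
`(i,j)`-entry is `C(i-1, n-j-1)·(m-1)^{n-j}` if `i + j ≥ n`, else `0`. -/
noncomputable def Qmat (m n : ℕ) : Matrix (Fin (n - 1)) (Fin (n - 1)) ℝ :=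
  fun i j =>
    if n ≤ (i.val + 1) + (j.val + 1) then
      (Nat.choose i.val (n - (j.val + 1) - 1) : ℝ) * ((m : ℝ) - 1) ^ (n - (j.val + 1))
    else 0

/-- Vertices of the zero-divisor graph of `F^n`: nonzero zero-divisors. -/
abbrev zdVertex (F : Type) [Field F] [Fintype F] (n : ℕ) : Type :=
  {x : Fin n → F // x ≠ 0 ∧ ∃ y : Fin n → F, y ≠ 0 ∧ x * y = 0}

/-- The zero-divisor graph `Γ(R_n)` of `R_n = F × ⋯ × F` (`n` factors). -/
def zdGraph (F : Type) [Field F] [Fintype F] (n : ℕ) : SimpleGraph (zdVertex F n) where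
  Adj a b := a ≠ b ∧ (a : Fin n → F) * (b : Fin n → F) = 0
  symm := ⟨fun a b ⟨hne, h⟩ => ⟨hne.symm, by rwa [mul_comm]⟩⟩
  loopless := ⟨fun a ⟨hne, _⟩ => hne rfl⟩

/-- The set of main eigenvalues of a finite simple graph: real numbers `μ` admitting an
eigenvector of the adjacency matrix with eigenvalue `μ` and nonzero coordinate sum. -/
noncomputable def mainEigs {V : Type} [Fintype V] (G : SimpleGraph V) : Set ℝ :=
  {μ : ℝ | ∃ v : V → ℝ, v ≠ 0 ∧ (G.adjMatrix ℝ) *ᵥ v = μ • v ∧ ∑ i, v i ≠ 0}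

/-- `X_{*0}`: vertices whose `(n-1)`-st coordinate is nonzero and `n`-th coordinate is zero. -/
def Xstar0 (F : Type) [Field F] [Fintype F] (n : ℕ) (hn : 2 ≤ n) : Set (zdVertex F n) :=
  {x | (x : Fin n → F) ⟨n - 2, by omega⟩ ≠ 0 ∧ (x : Fin n → F) ⟨n - 1, by omega⟩ = 0}

/-- `X_{0*}`: vertices whose `(n-1)`-st coordinate is zero and `n`-th coordinate is nonzero. -/
def X0star (F : Type) [Field F] [Fintype F] (n : ℕ) (hn : 2 ≤ n) : Set (zdVertex F n) :=
  {x | (x : Fin n → F) ⟨n - 2, by omega⟩ = 0 ∧ (x : Fin n → F) ⟨n - 1, by omega⟩ ≠ 0}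

def subVerts (F : Type) [Field F] [Fintype F] (n : ℕ) (hn : 2 ≤ n) : Set (zdVertex F n) :=
  Xstar0 F n hn ∪ X0star F n hn

/-- The bipartite subgraph `Γ'(R_n)` of `Γ(R_n)` induced by `X_{*0} ∪ X_{0*}`. -/
def zdSubGraph (F : Type) [Field F] [Fintype F] (n : ℕ) (hn : 2 ≤ n) :
    SimpleGraph ↥(subVerts F n hn) :=
  SimpleGraph.induce (subVerts F n hn) (zdGraph F n)

/-- The coefficient sequence `h`: `h 0 = 1`,
`h j = F_{m,j+1}^n − Σ_{r=0}^{j−1} h r · F_{m,j−r}^n` for `j ≥ 1`. -/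
noncomputable def hseq (m n : ℕ) : ℕ → ℝ
  | 0 => 1
  | j + 1 => (genFib m (j + 2)) ^ n -
      ∑ r ∈ (Finset.range (j + 1)).attach, hseq m n r.1 * (genFib m (j + 1 - r.1)) ^ n
  decreasing_by exact Finset.mem_range.mp r.2

set_option linter.unusedSectionVars false
set_option linter.unusedVariables false
set_option maxHeartbeats 1000000
open Finset

namespace ZDP

/-! ### Real constants -/

noncomputable def rr (m : ℕ) : ℝ := Real.sqrt (4 * m - 3)
noncomputable def la (m : ℕ) : ℝ := (1 + rr m) / 2
noncomputable def lb (m : ℕ) : ℝ := (1 - rr m) / 2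

variable {m : ℕ}

lemma rr_sq (hm : 2 ≤ m) : (rr m) ^ 2 = 4 * m - 3 := by
  have h2 : (2:ℝ) ≤ m := by exact_mod_cast hm
  rw [rr, sq]
  exact Real.mul_self_sqrt (by nlinarith)

lemma rr_gt_one (hm : 2 ≤ m) : 1 < rr m := by
  have h2 : (2:ℝ) ≤ m := by exact_mod_cast hm
  have h0 : 0 ≤ rr m := Real.sqrt_nonneg _
  have h5 : (5:ℝ) ≤ rr m ^ 2 := by rw [rr_sq hm]; linarith
  nlinarith [h0, h5]

lemma la_add_lb : la m + lb m = 1 := by simp only [la, lb]; ring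

lemma la_sub_lb : la m - lb m = rr m := by simp only [la, lb]; ring

lemma la_mul_lb (hm : 2 ≤ m) : la m * lb m = 1 - m := by
  have := rr_sq hm; simp only [la, lb]; nlinarith

lemma la_sq (hm : 2 ≤ m) : la m ^ 2 = la m + ((m:ℝ) - 1) := by
  have := rr_sq hm; simp only [la]; nlinarith

lemma lb_sq (hm : 2 ≤ m) : lb m ^ 2 = lb m + ((m:ℝ) - 1) := by
  have := rr_sq hm; simp only [lb]; nlinarith

lemma la_pos (hm : 2 ≤ m) : 0 < la m := by
  have := rr_gt_one hm; simp only [la]; linarith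

lemma lb_neg (hm : 2 ≤ m) : lb m < 0 := by
  have := rr_gt_one hm; simp only [lb]; linarith

lemma la_ne_lb (hm : 2 ≤ m) : la m ≠ lb m := by
  have := la_pos hm; have := lb_neg hm; linarith

lemma la_ne_zero (hm : 2 ≤ m) : la m ≠ 0 := ne_of_gt (la_pos hm)

lemma lb_ne_zero (hm : 2 ≤ m) : lb m ≠ 0 := ne_of_lt (lb_neg hm)

lemma rr_ne_zero (hm : 2 ≤ m) : rr m ≠ 0 := by
  have := rr_gt_one hm; linarith

lemma abs_lb_lt_la (hm : 2 ≤ m) : |lb m| < la m := by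
  rw [abs_of_neg (lb_neg hm)]
  have h := la_add_lb (m := m)
  have := la_pos hm
  linarith

lemma lb_pow_ne_la_pow (hm : 2 ≤ m) {n : ℕ} (hn : 1 ≤ n) : lb m ^ n ≠ la m ^ n := by
  intro h
  have h1 : |lb m| ^ n < la m ^ n := by
    apply pow_lt_pow_left₀ (abs_lb_lt_la hm) (abs_nonneg _) (by omega)
  have h2 : |lb m ^ n| = |lb m| ^ n := abs_pow _ _
  have h3 : |la m ^ n| = la m ^ n := abs_of_pos (pow_pos (la_pos hm) n)
  rw [h, h3] at h2
  linarith

/-! ### Core combinatorial set-up -/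

variable {F : Type} [Field F] [Fintype F] {n : ℕ}

/-- weight of coordinate `k` relative to a sign pattern `J`. -/
noncomputable def wtf (p q : ℝ) (J : Finset (Fin n)) (k : Fin n) : ℝ := if k ∈ J then p else q

/-- test function on `F^n`, with coordinates restricted to `E`. -/
noncomputable def ff (p q : ℝ) (E J : Finset (Fin n)) (x : Fin n → F) : ℝ :=
  ∏ k ∈ E, (if x k = 0 then wtf p q J k else 1)

/-- the corresponding eigenvalue-ish product. -/
noncomputable def muf (p q : ℝ) (E J : Finset (Fin n)) : ℝ := ∏ k ∈ E, wtf p q J k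

lemma muf_eq_pow {p q : ℝ} {E J : Finset (Fin n)} (hJE : J ⊆ E) :
    muf p q E J = p ^ J.card * q ^ (E.card - J.card) := by
  rw [muf, ← Finset.prod_sdiff hJE]
  have h1 : ∏ k ∈ E \ J, wtf p q J k = q ^ (E.card - J.card) := by
    rw [Finset.prod_congr rfl (fun k hk => ?_), Finset.prod_const, Finset.card_sdiff_of_subset hJE]
    · rw [wtf, if_neg (Finset.mem_sdiff.mp hk).2]
  have h2 : ∏ k ∈ J, wtf p q J k = p ^ J.card := by
    rw [Finset.prod_congr rfl (fun k hk => ?_), Finset.prod_const]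
    · rw [wtf, if_pos hk]
  rw [h1, h2, mul_comm]

lemma muf_ne_zero {p q : ℝ} (hp : p ≠ 0) (hq : q ≠ 0) (E J : Finset (Fin n)) :
    muf p q E J ≠ 0 := by
  rw [muf]
  apply Finset.prod_ne_zero_iff.mpr
  intro k _
  rw [wtf]; split <;> assumption

lemma ff_zero {p q : ℝ} (E J : Finset (Fin n)) : ff p q E J (0 : Fin n → F) = muf p q E J := by
  rw [ff, muf]
  exact Finset.prod_congr rfl (fun k _ => by simp)

/-- factorize a sum over `F^n` of a product of per-coordinate weights. -/
lemma sum_pi_prod (W : Fin n → F → ℝ) :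
    ∑ y : Fin n → F, ∏ k, W k (y k) = ∏ k, ∑ c : F, W k c := by
  rw [Finset.prod_univ_sum]
  simp [Fintype.piFinset_univ]

lemma mul_eq_zero_iff_pi (x y : Fin n → F) : x * y = 0 ↔ ∀ k, x k = 0 ∨ y k = 0 := by
  constructor
  · intro h k
    have := congrFun h k
    exact mul_eq_zero.mp this
  · intro h
    funext k
    rcases h k with h' | h' <;> simp [h']

lemma sum_if_zero (t : ℝ) : ∑ c : F, (if c = 0 then t else 1) = t + ((Fintype.card F : ℝ) - 1) := by
  have h : ∀ c : F, (if c = 0 then t else (1:ℝ)) = (if c = 0 then t - 1 else 0) + 1 := by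
    intro c; split <;> ring
  rw [Finset.sum_congr rfl (fun c _ => h c), Finset.sum_add_distrib]
  simp [Finset.sum_ite_eq', Finset.card_univ]
  ring

lemma card_ge_two : 2 ≤ Fintype.card F := Fintype.one_lt_card

/-- The master factorization: for `x : F^n`,
`∑_{y} [x*y=0] f_J(y) = μ_J f_J(x)` (over all of `F^n`, `E = univ`). -/
lemma master_sum (x : Fin n → F) (J : Finset (Fin n)) :
    ∑ y : Fin n → F, (if x * y = 0 then ff (la (Fintype.card F)) (lb (Fintype.card F)) univ J y else 0)
      = muf (la (Fintype.card F)) (lb (Fintype.card F)) univ J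
        * ff (la (Fintype.card F)) (lb (Fintype.card F)) univ J x := by
  set m := Fintype.card F with hmdef
  have hm : 2 ≤ m := card_ge_two
  set p := la m; set q := lb m
  have hstep : ∀ y : Fin n → F,
      (if x * y = 0 then ff p q univ J y else 0)
        = ∏ k, ((if x k = 0 ∨ y k = 0 then (1:ℝ) else 0) * (if y k = 0 then wtf p q J k else 1)) := by
    intro y
    rw [Finset.prod_mul_distrib, Finset.prod_boole]
    by_cases h : x * y = 0
    · rw [if_pos h, if_pos (by simpa using (mul_eq_zero_iff_pi x y).mp h), one_mul, ff]
    · rw [if_neg h, if_neg (by simpa using fun hall => h ((mul_eq_zero_iff_pi x y).mpr hall)), zero_mul]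
  rw [Finset.sum_congr rfl (fun y _ => hstep y),
    sum_pi_prod (fun k c => (if x k = 0 ∨ c = 0 then (1:ℝ) else 0) * (if c = 0 then wtf p q J k else 1))]
  have hper : ∀ k, (∑ c : F, (if x k = 0 ∨ c = 0 then (1:ℝ) else 0) * (if c = 0 then wtf p q J k else 1))
      = if x k = 0 then (wtf p q J k)^2 else wtf p q J k := by
    intro k
    by_cases hx : x k = 0
    · rw [if_pos hx]
      have : ∀ c : F, (if x k = 0 ∨ c = 0 then (1:ℝ) else 0) * (if c = 0 then wtf p q J k else 1)
          = if c = 0 then wtf p q J k else 1 := by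
        intro c; rw [if_pos (Or.inl hx), one_mul]
      rw [Finset.sum_congr rfl (fun c _ => this c), sum_if_zero]
      have hsq : (wtf p q J k)^2 = wtf p q J k + ((m:ℝ) - 1) := by
        rw [wtf]; split
        · exact la_sq hm
        · exact lb_sq hm
      rw [hsq, hmdef]
    · rw [if_neg hx]
      have : ∀ c : F, (if x k = 0 ∨ c = 0 then (1:ℝ) else 0) * (if c = 0 then wtf p q J k else 1)
          = if c = 0 then wtf p q J k else 0 := by
        intro c
        by_cases hc : c = 0
        · rw [if_pos hc, if_pos (Or.inr hc), if_pos hc, one_mul]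
        · rw [if_neg hc, if_neg (by tauto), if_neg hc, zero_mul]
      rw [Finset.sum_congr rfl (fun c _ => this c)]
      simp [Finset.sum_ite_eq']
  rw [Finset.prod_congr rfl (fun k _ => hper k)]
  have : ∀ k, (if x k = 0 then (wtf p q J k)^2 else wtf p q J k)
      = wtf p q J k * (if x k = 0 then wtf p q J k else 1) := by
    intro k; split <;> ring
  rw [Finset.prod_congr rfl (fun k _ => this k), Finset.prod_mul_distrib, muf, ff]

end ZDP

namespace ZDP

variable {F : Type} [Field F] [Fintype F] {n : ℕ}

lemma exists_ne_zero_coord {x : Fin n → F} (hx : x ≠ 0) : ∃ k, x k ≠ 0 := by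
  by_contra h
  push_neg at h
  exact hx (funext fun k => h k)

lemma vp_of_coord {y : Fin n → F} (hy : y ≠ 0) {k : Fin n} (hk : y k = 0) :
    y ≠ 0 ∧ ∃ z : Fin n → F, z ≠ 0 ∧ y * z = 0 := by
  refine ⟨hy, fun j => if j = k then 1 else 0, ?_, ?_⟩
  · intro h
    have := congrFun h k
    simp at this
  · funext j
    by_cases hj : j = k
    · subst hj; simp [hk]
    · simp [hj]

lemma vp_of_adj {x y : Fin n → F} (hx : x ≠ 0) (hy : y ≠ 0) (hxy : x * y = 0) :
    y ≠ 0 ∧ ∃ z : Fin n → F, z ≠ 0 ∧ y * z = 0 := by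
  obtain ⟨k, hk⟩ := exists_ne_zero_coord hx
  have hyk : y k = 0 := by
    rcases (mul_eq_zero_iff_pi x y).mp hxy k with h | h
    · exact absurd h hk
    · exact h
  exact vp_of_coord hy hyk

lemma sum_V (g : (Fin n → F) → ℝ) :
    ∑ v : zdVertex F n, g v.val
      = ∑ y : Fin n → F, if (y ≠ 0 ∧ ∃ z : Fin n → F, z ≠ 0 ∧ y * z = 0) then g y else 0 := by
  rw [← Finset.sum_filter]
  exact (Finset.sum_subtype _ (fun x => by simp) g).symm

/-- master sum over vertices -/
lemma master_sum_V {x : Fin n → F} (hx : x ≠ 0) (J : Finset (Fin n)) :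
    ∑ v : zdVertex F n,
        (if x * v.val = 0 then ff (la (Fintype.card F)) (lb (Fintype.card F)) univ J v.val else 0)
      = muf (la (Fintype.card F)) (lb (Fintype.card F)) univ J
          * ff (la (Fintype.card F)) (lb (Fintype.card F)) univ J x
        - muf (la (Fintype.card F)) (lb (Fintype.card F)) univ J := by
  set p := la (Fintype.card F); set q := lb (Fintype.card F)
  rw [sum_V (fun y => if x * y = 0 then ff p q univ J y else 0)]
  have key : ∀ y : Fin n → F,
      (if (y ≠ 0 ∧ ∃ z : Fin n → F, z ≠ 0 ∧ y * z = 0) then (if x * y = 0 then ff p q univ J y else 0) else 0)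
        = (if x * y = 0 then ff p q univ J y else 0) - (if y = 0 then muf p q univ J else 0) := by
    intro y
    by_cases hy : y = 0
    · subst hy
      rw [if_neg (by simp), if_pos rfl, if_pos (mul_zero x), ff_zero]
      ring
    · rw [if_neg hy]
      by_cases hxy : x * y = 0
      · rw [if_pos (vp_of_adj hx hy hxy), sub_zero]
      · rw [if_neg hxy]; simp
  rw [Finset.sum_congr rfl (fun y _ => key y), Finset.sum_sub_distrib, master_sum]
  congr 1
  simp
lemma adj_iff (v w : zdVertex F n) : (zdGraph F n).Adj v w ↔ v.val * w.val = 0 := by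
  constructor
  · exact fun h => (h : v ≠ w ∧ v.val * w.val = 0).2
  · intro h
    refine (⟨?_, h⟩ : v ≠ w ∧ v.val * w.val = 0)
    intro he
    subst he
    apply v.2.1
    funext k
    have := congrFun h k
    exact mul_self_eq_zero.mp this

lemma mulvec_apply (v : zdVertex F n → ℝ) (x : zdVertex F n) :
    (((zdGraph F n).adjMatrix ℝ) *ᵥ v) x
      = ∑ y : zdVertex F n, if x.val * y.val = 0 then v y else 0 := by
  simp only [Matrix.mulVec, dotProduct, SimpleGraph.adjMatrix_apply]
  refine Finset.sum_congr rfl (fun y _ => ?_)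
  by_cases h : (zdGraph F n).Adj x y
  · rw [if_pos h, if_pos ((adj_iff x y).mp h), one_mul]
  · rw [if_neg h, if_neg (fun hc => h ((adj_iff x y).mpr hc)), zero_mul]

/-- pairing computation -/
lemma pair_sum (J : Finset (Fin n)) (v : zdVertex F n → ℝ) :
    ∑ x : zdVertex F n,
        ff (la (Fintype.card F)) (lb (Fintype.card F)) univ J x.val * ((((zdGraph F n).adjMatrix ℝ) *ᵥ v) x)
      = muf (la (Fintype.card F)) (lb (Fintype.card F)) univ J
          * (∑ x : zdVertex F n, ff (la (Fintype.card F)) (lb (Fintype.card F)) univ J x.val * v x)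
        - muf (la (Fintype.card F)) (lb (Fintype.card F)) univ J * ∑ x : zdVertex F n, v x := by
  set p := la (Fintype.card F); set q := lb (Fintype.card F)
  have step1 : ∀ x : zdVertex F n,
      ff p q univ J x.val * ((((zdGraph F n).adjMatrix ℝ) *ᵥ v) x)
        = ∑ y : zdVertex F n, (if x.val * y.val = 0 then ff p q univ J x.val * v y else 0) := by
    intro x
    rw [mulvec_apply, Finset.mul_sum]
    exact Finset.sum_congr rfl (fun y _ => by rw [mul_ite, mul_zero])
  rw [Finset.sum_congr rfl (fun x _ => step1 x), Finset.sum_comm]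
  have step2 : ∀ y : zdVertex F n,
      ∑ x : zdVertex F n, (if x.val * y.val = 0 then ff p q univ J x.val * v y else 0)
        = (muf p q univ J * ff p q univ J y.val - muf p q univ J) * v y := by
    intro y
    have : ∀ x : zdVertex F n, (if x.val * y.val = 0 then ff p q univ J x.val * v y else 0)
        = (if y.val * x.val = 0 then ff p q univ J x.val else 0) * v y := by
      intro x
      rw [mul_comm y.val x.val]
      by_cases h : x.val * y.val = 0
      · rw [if_pos h, if_pos h]
      · rw [if_neg h, if_neg h, zero_mul]
    rw [Finset.sum_congr rfl (fun x _ => this x), ← Finset.sum_mul, master_sum_V y.2.1 J]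
  rw [Finset.sum_congr rfl (fun y _ => step2 y)]
  have step3 : ∀ y : zdVertex F n,
      (muf p q univ J * ff p q univ J y.val - muf p q univ J) * v y
        = muf p q univ J * (ff p q univ J y.val * v y) - muf p q univ J * v y := fun y => by ring
  rw [Finset.sum_congr rfl (fun y _ => step3 y), Finset.sum_sub_distrib,
    ← Finset.mul_sum, ← Finset.mul_sum]

lemma nonempty_V (hn : 2 ≤ n) : Nonempty (zdVertex F n) := by
  set x : Fin n → F := fun k => if k = ⟨0, by omega⟩ then 1 else 0 with hx
  have hx0 : x ≠ 0 := by
    intro h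
    have := congrFun h ⟨0, by omega⟩
    simp [hx] at this
  have hk : x ⟨1, by omega⟩ = 0 := by
    have hne : (⟨1, by omega⟩ : Fin n) ≠ ⟨0, by omega⟩ := by
      intro h
      simpa using congrArg Fin.val h
    simp [hx, hne]
  exact ⟨⟨x, vp_of_coord hx0 hk⟩⟩

/-- Existence: each `λ₊^i λ₋^{n-i}` (1 ≤ i ≤ n-1) is an eigenvalue. -/
lemma exists_eigvec (hn : 2 ≤ n) (i : ℕ) (h1 : 1 ≤ i) (h2 : i ≤ n - 1) :
    ∃ v : zdVertex F n → ℝ, v ≠ 0 ∧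
      ((zdGraph F n).adjMatrix ℝ) *ᵥ v
        = (la (Fintype.card F) ^ i * lb (Fintype.card F) ^ (n - i)) • v := by
  set p := la (Fintype.card F) with hp
  set q := lb (Fintype.card F) with hq
  have hm : 2 ≤ Fintype.card F := card_ge_two
  obtain ⟨J, -, hJcard⟩ := Finset.exists_subset_card_eq
    (by rw [Finset.card_univ, Fintype.card_fin]; omega : i ≤ (univ : Finset (Fin n)).card)
  have hJne : J.Nonempty := Finset.card_pos.mp (by omega)
  obtain ⟨kp, hkp⟩ := hJne
  have hcompl : (univ \ J).Nonempty := by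
    apply Finset.card_pos.mp
    rw [Finset.card_sdiff_of_subset (Finset.subset_univ J), Finset.card_univ, Fintype.card_fin, hJcard]
    omega
  obtain ⟨kq, hkq⟩ := hcompl
  have hkqJ : kq ∉ J := (Finset.mem_sdiff.mp hkq).2
  set J' := insert kq (J.erase kp) with hJ'
  have hkqJ' : kq ∈ J' := Finset.mem_insert_self _ _
  have hJ'card : J'.card = i := by
    rw [hJ', Finset.card_insert_of_notMem (fun h => hkqJ (Finset.mem_of_mem_erase h)),
      Finset.card_erase_of_mem hkp, hJcard]
    omega
  have hmufJ : muf p q univ J = p ^ i * q ^ (n - i) := by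
    rw [muf_eq_pow (Finset.subset_univ J), hJcard, Finset.card_univ, Fintype.card_fin]
  have hmufJ' : muf p q univ J' = p ^ i * q ^ (n - i) := by
    rw [muf_eq_pow (Finset.subset_univ J'), hJ'card, Finset.card_univ, Fintype.card_fin]
  refine ⟨fun x => ff p q univ J x.val - ff p q univ J' x.val, ?_, ?_⟩
  · set x0 : Fin n → F := fun k => if k ∈ J then 1 else 0 with hx0
    have hx0ne : x0 ≠ 0 := by
      intro h
      have := congrFun h kp
      simp [hx0, hkp] at this
    have hx0kq : x0 kq = 0 := by simp [hx0, hkqJ]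
    intro hv
    have hval := congrFun hv ⟨x0, vp_of_coord hx0ne hx0kq⟩
    simp only [Pi.zero_apply] at hval
    have hJ1 : ∏ k ∈ J, (if x0 k = 0 then wtf p q J k else 1) = 1 :=
      Finset.prod_eq_one (fun k hk => by
        have : x0 k = 1 := by simp [hx0, hk]
        rw [this, if_neg one_ne_zero])
    have hJ1' : ∏ k ∈ J, (if x0 k = 0 then wtf p q J' k else 1) = 1 :=
      Finset.prod_eq_one (fun k hk => by
        have : x0 k = 1 := by simp [hx0, hk]
        rw [this, if_neg one_ne_zero])
    have hffJ : ff p q univ J x0 = q ^ (n - i) := by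
      rw [ff, ← Finset.prod_sdiff (Finset.subset_univ J), hJ1, mul_one]
      have : ∀ k ∈ univ \ J, (if x0 k = 0 then wtf p q J k else 1) = q := by
        intro k hk
        have hknJ : k ∉ J := (Finset.mem_sdiff.mp hk).2
        have : x0 k = 0 := by simp [hx0, hknJ]
        rw [this, if_pos rfl, wtf, if_neg hknJ]
      rw [Finset.prod_congr rfl this, Finset.prod_const,
        Finset.card_sdiff_of_subset (Finset.subset_univ J), Finset.card_univ, Fintype.card_fin, hJcard]
    have hffJ' : ff p q univ J' x0 = p * q ^ (n - i - 1) := by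
      rw [ff, ← Finset.prod_sdiff (Finset.subset_univ J), hJ1', mul_one]
      have hstep : ∀ k ∈ univ \ J, (if x0 k = 0 then wtf p q J' k else 1) = wtf p q J' k := by
        intro k hk
        have hknJ : k ∉ J := (Finset.mem_sdiff.mp hk).2
        have : x0 k = 0 := by simp [hx0, hknJ]
        rw [this, if_pos rfl]
      rw [Finset.prod_congr rfl hstep, ← Finset.mul_prod_erase _ _ hkq, wtf, if_pos hkqJ']
      congr 1
      have hrest : ∀ k ∈ (univ \ J).erase kq, wtf p q J' k = q := by
        intro k hk
        have hkne : k ≠ kq := (Finset.mem_erase.mp hk).1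
        have hknJ : k ∉ J := (Finset.mem_sdiff.mp (Finset.mem_of_mem_erase hk)).2
        have hknJ' : k ∉ J' := by
          rw [hJ']
          intro hmem
          rcases Finset.mem_insert.mp hmem with h | h
          · exact hkne h
          · exact hknJ (Finset.mem_of_mem_erase h)
        rw [wtf, if_neg hknJ']
      rw [Finset.prod_congr rfl hrest, Finset.prod_const, Finset.card_erase_of_mem hkq,
        Finset.card_sdiff_of_subset (Finset.subset_univ J), Finset.card_univ, Fintype.card_fin, hJcard]
    rw [hffJ, hffJ'] at hval
    have hpow : q ^ (n - i) = q ^ (n - i - 1) * q := by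
      rw [← pow_succ]
      congr 1
      omega
    rw [hpow] at hval
    have hne : (q - p) * q ^ (n - i - 1) ≠ 0 :=
      mul_ne_zero (sub_ne_zero.mpr (fun h => la_ne_lb hm h.symm))
        (pow_ne_zero _ (lb_ne_zero hm))
    exact hne (by linear_combination hval)
  · funext x
    rw [mulvec_apply]
    have hsplit : ∀ y : zdVertex F n,
        (if x.val * y.val = 0 then (ff p q univ J y.val - ff p q univ J' y.val) else 0)
          = (if x.val * y.val = 0 then ff p q univ J y.val else 0)
            - (if x.val * y.val = 0 then ff p q univ J' y.val else 0) := by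
      intro y
      split <;> ring
    rw [Finset.sum_congr rfl (fun y _ => hsplit y), Finset.sum_sub_distrib,
      master_sum_V x.2.1 J, master_sum_V x.2.1 J', Pi.smul_apply, smul_eq_mul,
      hmufJ, hmufJ']
    ring

/-- Non-mainness: every eigenvector for `λ₊^i λ₋^{n-i}` has coordinate sum zero. -/
lemma eig_sum_zero (i : ℕ) (h1 : 1 ≤ i) (h2 : i ≤ n) (v : zdVertex F n → ℝ)
    (hv : ((zdGraph F n).adjMatrix ℝ) *ᵥ v
      = (la (Fintype.card F) ^ i * lb (Fintype.card F) ^ (n - i)) • v) :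
    ∑ x : zdVertex F n, v x = 0 := by
  set p := la (Fintype.card F) with hp
  set q := lb (Fintype.card F) with hq
  have hm : 2 ≤ Fintype.card F := card_ge_two
  obtain ⟨J, -, hJcard⟩ := Finset.exists_subset_card_eq
    (by rw [Finset.card_univ, Fintype.card_fin]; omega : i ≤ (univ : Finset (Fin n)).card)
  have hmufJ : muf p q univ J = p ^ i * q ^ (n - i) := by
    rw [muf_eq_pow (Finset.subset_univ J), hJcard, Finset.card_univ, Fintype.card_fin]
  have h := pair_sum J v
  rw [hv] at h
  have hL : ∑ x : zdVertex F n, ff p q univ J x.val * ((p ^ i * q ^ (n - i)) • v) x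
      = (p ^ i * q ^ (n - i)) * ∑ x : zdVertex F n, ff p q univ J x.val * v x := by
    rw [Finset.mul_sum]
    exact Finset.sum_congr rfl (fun x _ => by simp only [Pi.smul_apply, smul_eq_mul]; ring)
  rw [hL, hmufJ] at h
  have hzero : (p ^ i * q ^ (n - i)) * ∑ x : zdVertex F n, v x = 0 := by linarith
  have hne : p ^ i * q ^ (n - i) ≠ 0 :=
    mul_ne_zero (pow_ne_zero _ (la_ne_zero hm)) (pow_ne_zero _ (lb_ne_zero hm))
  exact (mul_eq_zero.mp hzero).resolve_left hne

/-- the endgame helper for the classification -/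
lemma endgame (hn : 2 ≤ n) {μ c : ℝ} (J : Finset (Fin n)) (v : zdVertex F n → ℝ)
    (hveq : ((zdGraph F n).adjMatrix ℝ) *ᵥ v = μ • v)
    (hμ : μ = muf (la (Fintype.card F)) (lb (Fintype.card F)) univ J)
    (hveval : ∀ y : zdVertex F n,
      (rr (Fintype.card F)) ^ n * (μ * v y)
        = ff (la (Fintype.card F)) (lb (Fintype.card F)) univ J y.val * c) :
    c = 0 := by
  set p := la (Fintype.card F) with hp
  set q := lb (Fintype.card F) with hq
  set s := rr (Fintype.card F) with hs
  have hm : 2 ≤ Fintype.card F := card_ge_two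
  obtain ⟨x⟩ := nonempty_V (F := F) hn
  have hAv : ∀ y : zdVertex F n, (((zdGraph F n).adjMatrix ℝ) *ᵥ v) y = μ * v y := by
    intro y; rw [hveq]; simp
  have e1 : s ^ n * (μ * ((((zdGraph F n).adjMatrix ℝ) *ᵥ v) x))
      = (muf p q univ J * ff p q univ J x.val - muf p q univ J) * c := by
    rw [mulvec_apply, Finset.mul_sum, Finset.mul_sum]
    have hper : ∀ y : zdVertex F n,
        s ^ n * (μ * (if x.val * y.val = 0 then v y else 0))
          = (if x.val * y.val = 0 then ff p q univ J y.val else 0) * c := by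
      intro y
      by_cases hc : x.val * y.val = 0
      · rw [if_pos hc, if_pos hc, hveval y]
      · rw [if_neg hc, if_neg hc, mul_zero, mul_zero, zero_mul]
    rw [Finset.sum_congr rfl (fun y _ => hper y), ← Finset.sum_mul, master_sum_V x.2.1 J]
  have e2 : s ^ n * (μ * ((((zdGraph F n).adjMatrix ℝ) *ᵥ v) x))
      = μ * (ff p q univ J x.val * c) := by
    rw [hAv x]
    calc s ^ n * (μ * (μ * v x)) = μ * (s ^ n * (μ * v x)) := by ring
    _ = μ * (ff p q univ J x.val * c) := by rw [hveval x]
  rw [hμ] at e1 e2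
  have hzero : c * muf p q univ J = 0 := by linear_combination e1 - e2
  have hMne : muf p q univ J ≠ 0 := muf_ne_zero (la_ne_zero hm) (lb_ne_zero hm) _ _
  exact (mul_eq_zero.mp hzero).resolve_right hMne

/-- Classification: a nonzero eigenvalue all of whose eigenvectors sum to zero
must be one of the `λ₊^i λ₋^{n-i}`. -/
lemma eig_classify (hn : 2 ≤ n) (μ : ℝ) (hμ0 : μ ≠ 0) (v : zdVertex F n → ℝ) (hv0 : v ≠ 0)
    (hveq : ((zdGraph F n).adjMatrix ℝ) *ᵥ v = μ • v)
    (hsum : ∑ x : zdVertex F n, v x = 0) :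
    ∃ i : ℕ, 1 ≤ i ∧ i ≤ n - 1
      ∧ μ = la (Fintype.card F) ^ i * lb (Fintype.card F) ^ (n - i) := by
  by_contra hnot
  push_neg at hnot
  set p := la (Fintype.card F) with hp
  set q := lb (Fintype.card F) with hq
  set s := rr (Fintype.card F) with hs
  have hm : 2 ≤ Fintype.card F := card_ge_two
  have hsne : s ≠ 0 := rr_ne_zero hm
  set Fc : Finset (Fin n) → ℝ := fun J => ∑ x : zdVertex F n, ff p q univ J x.val * v x with hFc
  have step1 : ∀ J : Finset (Fin n), μ * Fc J = muf p q univ J * Fc J := by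
    intro J
    have h := pair_sum J v
    rw [hveq, hsum, mul_zero, sub_zero] at h
    have hL : ∑ x : zdVertex F n, ff p q univ J x.val * ((μ • v) x) = μ * Fc J := by
      rw [hFc, Finset.mul_sum]
      exact Finset.sum_congr rfl (fun x _ => by simp only [Pi.smul_apply, smul_eq_mul]; ring)
    rw [hL] at h
    exact h
  have step2 : ∀ J : Finset (Fin n), J ≠ ∅ → J ≠ univ → Fc J = 0 := by
    intro J hne hnu
    have hcard1 : 1 ≤ J.card := Finset.card_pos.mpr (Finset.nonempty_iff_ne_empty.mpr hne)
    have hcardlt : J.card < n := by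
      have hle : J.card ≤ n := by
        have := Finset.card_le_univ J
        rwa [Fintype.card_fin] at this
      rcases lt_or_eq_of_le hle with h | h
      · exact h
      · exact absurd (Finset.eq_univ_of_card J (by rw [h, Fintype.card_fin])) hnu
    have hmuf : muf p q univ J = p ^ J.card * q ^ (n - J.card) := by
      rw [muf_eq_pow (Finset.subset_univ J), Finset.card_univ, Fintype.card_fin]
    have hμne : μ ≠ muf p q univ J := by
      rw [hmuf]
      exact hnot J.card hcard1 (by omega)
    have h2 : (μ - muf p q univ J) * Fc J = 0 := by
      rw [sub_mul]
      linarith [step1 J]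
    rcases mul_eq_zero.mp h2 with h | h
    · exact absurd (by linarith : μ = muf p q univ J) hμne
    · exact h
  set tj : (Fin n → F) → Finset (Fin n) → ℝ := fun x J =>
    (∏ k ∈ J, (if x k = 0 then p else 1)) * ∏ k ∈ univ \ J, (if x k = 0 then -q else -1)
    with htj
  have hT1 : ∀ x y : Fin n → F, (if x * y = 0 then s ^ n else 0)
      = ∑ J ∈ (univ : Finset (Fin n)).powerset, tj x J * ff p q univ J y := by
    intro x y
    have hterm : ∀ J ∈ (univ : Finset (Fin n)).powerset, tj x J * ff p q univ J y
        = (∏ k ∈ J, ((if x k = 0 then p else 1) * (if y k = 0 then p else 1)))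
          * ∏ k ∈ univ \ J, ((if x k = 0 then -q else -1) * (if y k = 0 then q else 1)) := by
      intro J hJ
      have hffsplit : ff p q univ J y
          = (∏ k ∈ J, (if y k = 0 then p else 1)) * ∏ k ∈ univ \ J, (if y k = 0 then q else 1) := by
        rw [ff, ← Finset.prod_sdiff (Finset.subset_univ J), mul_comm]
        congr 1
        · exact Finset.prod_congr rfl (fun k hk => by
            rw [wtf, if_pos hk])
        · exact Finset.prod_congr rfl (fun k hk => by
            rw [wtf, if_neg (Finset.mem_sdiff.mp hk).2])
      rw [htj, hffsplit, mul_mul_mul_comm, ← Finset.prod_mul_distrib, ← Finset.prod_mul_distrib]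
    rw [Finset.sum_congr rfl hterm, ← Finset.prod_add]
    have h1 : p + q = 1 := la_add_lb
    have h2 : p - q = s := la_sub_lb
    have hper : ∀ k : Fin n, ((if x k = 0 then p else 1) * (if y k = 0 then p else 1))
        + ((if x k = 0 then -q else -1) * (if y k = 0 then q else 1))
        = s * (if x k = 0 ∨ y k = 0 then 1 else 0) := by
      intro k
      by_cases hxk : x k = 0 <;> by_cases hyk : y k = 0
      · rw [if_pos hxk, if_pos hyk, if_pos hxk, if_pos hyk, if_pos (Or.inl hxk), mul_one]
        linear_combination (p - q) * h1 + h2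
      · rw [if_pos hxk, if_neg hyk, if_pos hxk, if_neg hyk, if_pos (Or.inl hxk), mul_one]
        linear_combination h2
      · rw [if_neg hxk, if_pos hyk, if_neg hxk, if_pos hyk, if_pos (Or.inr hyk), mul_one]
        linear_combination h2
      · rw [if_neg hxk, if_neg hyk, if_neg hxk, if_neg hyk,
          if_neg (by tauto : ¬(x k = 0 ∨ y k = 0)), mul_zero]
        ring
    rw [Finset.prod_congr rfl (fun k _ => hper k), Finset.prod_mul_distrib,
      Finset.prod_const, Finset.prod_boole, Finset.card_univ, Fintype.card_fin]
    by_cases hxy : x * y = 0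
    · rw [if_pos hxy, if_pos (by simpa using (mul_eq_zero_iff_pi x y).mp hxy), mul_one]
    · rw [if_neg hxy,
        if_neg (by simpa using fun hall => hxy ((mul_eq_zero_iff_pi x y).mpr hall)), mul_zero]
  have huniv_ne : (∅ : Finset (Fin n)) ≠ univ := by
    have : ((⟨0, by omega⟩ : Fin n)) ∈ (univ : Finset (Fin n)) := Finset.mem_univ _
    intro h
    rw [← h] at this
    exact absurd this (Finset.notMem_empty _)
  have step4 : ∀ x : zdVertex F n, s ^ n * (μ * v x)
      = tj x.val ∅ * Fc ∅ + tj x.val univ * Fc univ := by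
    intro x
    have hAv : (((zdGraph F n).adjMatrix ℝ) *ᵥ v) x = μ * v x := by rw [hveq]; simp
    have hc1 : s ^ n * (μ * v x)
        = ∑ y : zdVertex F n, (if x.val * y.val = 0 then s ^ n else 0) * v y := by
      rw [← hAv, mulvec_apply, Finset.mul_sum]
      exact Finset.sum_congr rfl (fun y _ => by split <;> ring)
    have hc2 : ∀ y : zdVertex F n, (if x.val * y.val = 0 then s ^ n else 0) * v y
        = ∑ J ∈ (univ : Finset (Fin n)).powerset, tj x.val J * (ff p q univ J y.val * v y) := by
      intro y
      rw [hT1 x.val y.val, Finset.sum_mul]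
      exact Finset.sum_congr rfl (fun J _ => by ring)
    rw [hc1, Finset.sum_congr rfl (fun y _ => hc2 y), Finset.sum_comm]
    have hc3 : ∀ J ∈ (univ : Finset (Fin n)).powerset,
        ∑ y : zdVertex F n, tj x.val J * (ff p q univ J y.val * v y) = tj x.val J * Fc J := by
      intro J _
      rw [hFc, Finset.mul_sum]
    rw [Finset.sum_congr rfl hc3]
    have hpair : ∑ J ∈ ({∅, univ} : Finset (Finset (Fin n))), tj x.val J * Fc J
        = tj x.val ∅ * Fc ∅ + tj x.val univ * Fc univ := Finset.sum_pair huniv_ne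
    rw [← hpair]
    refine (Finset.sum_subset ?_ ?_).symm
    · intro J hJ
      rcases Finset.mem_insert.mp hJ with h | h
      · subst h; simp
      · rw [Finset.mem_singleton.mp h]; simp
    · intro J hJ hJne
      have hJe : J ≠ ∅ := fun h => hJne (by rw [h]; exact Finset.mem_insert_self _ _)
      have hJu : J ≠ univ := fun h => hJne (by rw [h]; exact Finset.mem_insert_of_mem (Finset.mem_singleton_self _))
      rw [step2 J hJe hJu, mul_zero]
  have htj_empty : ∀ x : Fin n → F, tj x ∅ = (-1) ^ n * ff p q univ ∅ x := by
    intro x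
    rw [htj]
    simp only [Finset.prod_empty, one_mul, Finset.sdiff_empty]
    have : ∀ k : Fin n, (if x k = 0 then -q else -1)
        = (-1) * (if x k = 0 then wtf p q ∅ k else 1) := by
      intro k
      have : wtf p q (∅ : Finset (Fin n)) k = q := by rw [wtf, if_neg (Finset.notMem_empty k)]
      rw [this]
      split <;> ring
    rw [Finset.prod_congr rfl (fun k _ => this k), Finset.prod_mul_distrib, Finset.prod_const,
      Finset.card_univ, Fintype.card_fin, ff]
  have htj_univ : ∀ x : Fin n → F, tj x univ = ff p q univ univ x := by
    intro x
    rw [htj]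
    simp only [Finset.sdiff_self, Finset.prod_empty, mul_one]
    rw [ff]
    refine Finset.prod_congr rfl (fun k hk => ?_)
    have : wtf p q (univ : Finset (Fin n)) k = p := by rw [wtf, if_pos (Finset.mem_univ k)]
    rw [this]
  by_cases hFe : Fc ∅ = 0
  · by_cases hFu : Fc univ = 0
    · apply hv0
      funext x
      have h := step4 x
      rw [hFe, hFu, mul_zero, mul_zero, add_zero] at h
      have hvx : μ * v x = 0 := by
        rcases mul_eq_zero.mp h with h' | h'
        · exact absurd h' (pow_ne_zero _ hsne)
        · exact h'
      have := (mul_eq_zero.mp hvx).resolve_left hμ0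
      simpa using this
    · -- Fc univ ≠ 0
      have hμ : μ = muf p q (univ : Finset (Fin n)) univ := by
        have h2 : (μ - muf p q (univ : Finset (Fin n)) univ) * Fc univ = 0 := by
          rw [sub_mul]; linarith [step1 univ]
        rcases mul_eq_zero.mp h2 with h | h
        · linarith
        · exact absurd h hFu
      have hveval : ∀ y : zdVertex F n,
          s ^ n * (μ * v y) = ff p q univ univ y.val * Fc univ := by
        intro y
        rw [step4 y, hFe, mul_zero, zero_add, htj_univ]
      exact hFu (endgame hn univ v hveq hμ hveval)
  · -- Fc ∅ ≠ 0
    have hμ : μ = muf p q (univ : Finset (Fin n)) ∅ := by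
      have h2 : (μ - muf p q (univ : Finset (Fin n)) ∅) * Fc ∅ = 0 := by
        rw [sub_mul]; linarith [step1 ∅]
      rcases mul_eq_zero.mp h2 with h | h
      · linarith
      · exact absurd h hFe
    have hmufe : muf p q (univ : Finset (Fin n)) ∅ = q ^ n := by
      rw [muf_eq_pow (Finset.empty_subset _), Finset.card_empty, pow_zero, one_mul,
        Finset.card_univ, Fintype.card_fin, Nat.sub_zero]
    have hmufu : muf p q (univ : Finset (Fin n)) univ = p ^ n := by
      rw [muf_eq_pow (Finset.Subset.refl _), Finset.card_univ, Fintype.card_fin,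
        Nat.sub_self, pow_zero, mul_one]
    have hFu : Fc univ = 0 := by
      have hμne : μ ≠ muf p q (univ : Finset (Fin n)) univ := by
        rw [hmufu, hμ, hmufe]
        exact lb_pow_ne_la_pow hm (by omega)
      have h2 : (μ - muf p q (univ : Finset (Fin n)) univ) * Fc univ = 0 := by
        rw [sub_mul]; linarith [step1 univ]
      rcases mul_eq_zero.mp h2 with h | h
      · exact absurd (by linarith : μ = muf p q (univ : Finset (Fin n)) univ) hμne
      · exact h
    have hveval : ∀ y : zdVertex F n,
        s ^ n * (μ * v y) = ff p q univ ∅ y.val * ((-1) ^ n * Fc ∅) := by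
      intro y
      rw [step4 y, hFu, mul_zero, add_zero, htj_empty]
      ring
    have := endgame hn ∅ v hveq hμ hveval
    rcases mul_eq_zero.mp this with h | h
    · exact absurd h (pow_ne_zero _ (by norm_num : (-1:ℝ) ≠ 0))
    · exact hFe h

end ZDP

namespace ZDP

variable {F : Type} [Field F] [Fintype F] {n : ℕ}

/-- the index set of "free" coordinates for the subgraph analysis -/
def EE (n : ℕ) (hn : 2 ≤ n) : Finset (Fin n) :=
  univ \ {⟨n - 2, by omega⟩, ⟨n - 1, by omega⟩}

lemma ab_ne (hn : 2 ≤ n) : (⟨n - 2, by omega⟩ : Fin n) ≠ ⟨n - 1, by omega⟩ := by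
  intro h
  have := congrArg Fin.val h
  simp at this
  omega

lemma card_EE (hn : 2 ≤ n) : (EE n hn).card = n - 2 := by
  rw [EE, Finset.card_sdiff_of_subset (Finset.subset_univ _), Finset.card_univ, Fintype.card_fin,
    Finset.card_pair (ab_ne hn)]

lemma mem_EE_iff (hn : 2 ≤ n) (k : Fin n) :
    k ∈ EE n hn ↔ k ≠ ⟨n - 2, by omega⟩ ∧ k ≠ ⟨n - 1, by omega⟩ := by
  rw [EE]
  simp [Finset.mem_sdiff]

/-- the xor predicate describing membership in `subVerts` at the function level -/
def WP (n : ℕ) (hn : 2 ≤ n) (y : Fin n → F) : Prop :=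
  (y ⟨n - 2, by omega⟩ ≠ 0 ∧ y ⟨n - 1, by omega⟩ = 0)
    ∨ (y ⟨n - 2, by omega⟩ = 0 ∧ y ⟨n - 1, by omega⟩ ≠ 0)

lemma mem_subVerts_iff (hn : 2 ≤ n) (v : zdVertex F n) :
    v ∈ subVerts F n hn ↔ WP n hn v.val := by
  rw [subVerts, Set.mem_union, Xstar0, X0star, Set.mem_setOf_eq, Set.mem_setOf_eq, WP]

/-- summation over the subgraph vertex set -/
lemma sum_W (hn : 2 ≤ n) (g : (Fin n → F) → ℝ) :
    ∑ w : ↥(subVerts F n hn), g w.val.val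
      = ∑ y : Fin n → F,
          if ((y ≠ 0 ∧ ∃ z : Fin n → F, z ≠ 0 ∧ y * z = 0) ∧ WP n hn y) then g y else 0 := by
  have step1 : ∑ w : ↥(subVerts F n hn), g w.val.val
      = ∑ v : zdVertex F n, if WP n hn v.val then g v.val else 0 := by
    rw [← Finset.sum_filter]
    refine (Finset.sum_subtype _ (fun x => ?_) (fun (v : zdVertex F n) => g v.val)).symm
    simp [Finset.mem_filter, mem_subVerts_iff hn]
  rw [step1, sum_V (fun y => if WP n hn y then g y else 0)]
  refine Finset.sum_congr rfl (fun y _ => ?_)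
  by_cases h1 : (y ≠ 0 ∧ ∃ z : Fin n → F, z ≠ 0 ∧ y * z = 0)
  · by_cases h2 : WP n hn y
    · rw [if_pos h1, if_pos h2, if_pos ⟨h1, h2⟩]
    · rw [if_pos h1, if_neg h2, if_neg (fun hc => h2 hc.2)]
  · rw [if_neg h1, if_neg (fun hc => h1 hc.1)]

/-- Master sum over the subgraph vertex set. `c` is the side where `x` is nonzero. -/
lemma master_sum_W (hn : 2 ≤ n) (c d : Fin n)
    (hcd : (c = (⟨n - 2, by omega⟩ : Fin n) ∧ d = (⟨n - 1, by omega⟩ : Fin n))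
      ∨ (c = (⟨n - 1, by omega⟩ : Fin n) ∧ d = (⟨n - 2, by omega⟩ : Fin n)))
    (K : Finset (Fin n)) {x : Fin n → F} (hxc : x c ≠ 0) (hxd : x d = 0) :
    ∑ w : ↥(subVerts F n hn),
        (if x * w.val.val = 0
          then ff (la (Fintype.card F)) (lb (Fintype.card F)) (EE n hn) K w.val.val else 0)
      = ((Fintype.card F : ℝ) - 1)
          * muf (la (Fintype.card F)) (lb (Fintype.card F)) (EE n hn) K
          * ff (la (Fintype.card F)) (lb (Fintype.card F)) (EE n hn) K x := by
  set p := la (Fintype.card F) with hp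
  set q := lb (Fintype.card F) with hq
  have hm : 2 ≤ Fintype.card F := card_ge_two
  have hcdne : c ≠ d := by
    rcases hcd with ⟨hc, hd⟩ | ⟨hc, hd⟩
    · rw [hc, hd]; exact ab_ne hn
    · rw [hc, hd]; exact (ab_ne hn).symm
  have hEcd : EE n hn = univ \ {c, d} := by
    rcases hcd with ⟨hc, hd⟩ | ⟨hc, hd⟩
    · rw [hc, hd, EE]
    · rw [hc, hd, EE, Finset.pair_comm]
  have hmemE : ∀ k : Fin n, k ∈ EE n hn ↔ k ≠ c ∧ k ≠ d := by
    intro k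
    rw [hEcd]
    simp [Finset.mem_sdiff]
  rw [sum_W hn (fun y => if x * y = 0 then ff p q (EE n hn) K y else 0)]
  -- per-coordinate weight
  set WW : Fin n → F → ℝ := fun k cv =>
    if k = c then (if cv = 0 then 1 else 0)
    else if k = d then (if cv = 0 then 0 else 1)
    else (if x k = 0 ∨ cv = 0 then 1 else 0) * (if cv = 0 then wtf p q K k else 1) with hWW
  have hpoint : ∀ y : Fin n → F,
      (if ((y ≠ 0 ∧ ∃ z : Fin n → F, z ≠ 0 ∧ y * z = 0) ∧ WP n hn y)
        then (if x * y = 0 then ff p q (EE n hn) K y else 0) else 0)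
      = ∏ k, WW k (y k) := by
    intro y
    -- split the RHS product
    have hprodsplit : ∏ k, WW k (y k)
        = WW c (y c) * WW d (y d) * ∏ k ∈ EE n hn, WW k (y k) := by
      rw [hEcd, ← Finset.prod_sdiff (Finset.subset_univ ({c, d} : Finset (Fin n))),
        Finset.prod_pair hcdne, mul_comm]
    have hWc : WW c (y c) = if y c = 0 then 1 else 0 := by rw [hWW]; simp
    have hWd : WW d (y d) = if y d = 0 then 0 else 1 := by
      rw [hWW]
      simp [if_neg (Ne.symm hcdne)]
    have hWE : ∀ k ∈ EE n hn, WW k (y k)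
        = (if x k = 0 ∨ y k = 0 then 1 else 0) * (if y k = 0 then wtf p q K k else 1) := by
      intro k hk
      obtain ⟨hkc, hkd⟩ := (hmemE k).mp hk
      rw [hWW]
      simp only [if_neg hkc, if_neg hkd]
    by_cases hyc : y c = 0
    · by_cases hyd : y d = 0
      · -- both zero: RHS zero; LHS zero since WP fails
        have hrhs : ∏ k, WW k (y k) = 0 := by
          rw [hprodsplit, hWd, if_pos hyd]
          ring
        rw [hrhs]
        have hWPfail : ¬ WP n hn y := by
          intro h
          rcases hcd with ⟨hc, hd⟩ | ⟨hc, hd⟩ <;> rw [hc] at hyc <;> rw [hd] at hyd <;>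
            rcases h with ⟨h1, h2⟩ | ⟨h1, h2⟩ <;> tauto
        rw [if_neg (fun hc' => hWPfail hc'.2)]
      · -- y c = 0, y d ≠ 0 : main case
        have hVP : y ≠ 0 ∧ ∃ z : Fin n → F, z ≠ 0 ∧ y * z = 0 := by
          have hy0 : y ≠ 0 := fun h => hyd (by rw [h]; rfl)
          exact vp_of_coord hy0 hyc
        have hWPy : WP n hn y := by
          rcases hcd with ⟨hc, hd⟩ | ⟨hc, hd⟩
          · right; exact ⟨by rw [← hc]; exact hyc, by rw [← hd]; exact hyd⟩
          · left; exact ⟨by rw [← hd]; exact hyd, by rw [← hc]; exact hyc⟩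
        rw [if_pos ⟨hVP, hWPy⟩, hprodsplit, hWc, hWd, if_pos hyc, if_neg hyd, one_mul, one_mul]
        have hcond : (x * y = 0) ↔ ∀ k ∈ EE n hn, x k = 0 ∨ y k = 0 := by
          constructor
          · intro h k _
            exact (mul_eq_zero_iff_pi x y).mp h k
          · intro h
            apply (mul_eq_zero_iff_pi x y).mpr
            intro k
            by_cases hkc : k = c
            · subst hkc; exact Or.inr hyc
            · by_cases hkd : k = d
              · subst hkd; exact Or.inl hxd
              · exact h k ((hmemE k).mpr ⟨hkc, hkd⟩)
        rw [Finset.prod_congr rfl hWE, Finset.prod_mul_distrib, Finset.prod_boole]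
        by_cases hxy : x * y = 0
        · rw [if_pos hxy, if_pos (hcond.mp hxy), one_mul, ff]
        · rw [if_neg hxy, if_neg (fun hall => hxy (hcond.mpr hall)), zero_mul]
    · -- y c ≠ 0 : both sides zero
      have hrhs : ∏ k, WW k (y k) = 0 := by
        rw [hprodsplit, hWc, if_neg hyc]
        ring
      rw [hrhs]
      have hxyne : x * y ≠ 0 := by
        intro h
        rcases (mul_eq_zero_iff_pi x y).mp h c with h' | h'
        · exact hxc h'
        · exact hyc h'
      by_cases houter : ((y ≠ 0 ∧ ∃ z : Fin n → F, z ≠ 0 ∧ y * z = 0) ∧ WP n hn y)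
      · rw [if_pos houter, if_neg hxyne]
      · rw [if_neg houter]
  rw [Finset.sum_congr rfl (fun y _ => hpoint y), sum_pi_prod WW]
  -- compute the product of column sums
  have hsplit : ∏ k, (∑ cv : F, WW k cv)
      = (∑ cv : F, WW c cv) * (∑ cv : F, WW d cv) * ∏ k ∈ EE n hn, (∑ cv : F, WW k cv) := by
    rw [hEcd, ← Finset.prod_sdiff (Finset.subset_univ ({c, d} : Finset (Fin n))),
      Finset.prod_pair hcdne, mul_comm]
  have hsc : (∑ cv : F, WW c cv) = 1 := by
    rw [hWW]
    simp
  have hsd : (∑ cv : F, WW d cv) = (Fintype.card F : ℝ) - 1 := by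
    have : ∀ cv : F, WW d cv = if cv = 0 then 0 else 1 := by
      intro cv
      rw [hWW]
      simp [if_neg (Ne.symm hcdne)]
    rw [Finset.sum_congr rfl (fun cv _ => this cv)]
    have h2 : ∀ cv : F, (if cv = 0 then (0:ℝ) else 1) = 1 - (if cv = 0 then 1 else 0) := by
      intro cv; split <;> ring
    rw [Finset.sum_congr rfl (fun cv _ => h2 cv), Finset.sum_sub_distrib]
    simp [Finset.sum_ite_eq', Finset.card_univ]
  have hsE : ∀ k ∈ EE n hn, (∑ cv : F, WW k cv)
      = wtf p q K k * (if x k = 0 then wtf p q K k else 1) := by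
    intro k hk
    obtain ⟨hkc, hkd⟩ := (hmemE k).mp hk
    have hform : ∀ cv : F, WW k cv
        = (if x k = 0 ∨ cv = 0 then 1 else 0) * (if cv = 0 then wtf p q K k else 1) := by
      intro cv
      rw [hWW]
      simp only [if_neg hkc, if_neg hkd]
    rw [Finset.sum_congr rfl (fun cv _ => hform cv)]
    by_cases hxk : x k = 0
    · have : ∀ cv : F, (if x k = 0 ∨ cv = 0 then (1:ℝ) else 0) * (if cv = 0 then wtf p q K k else 1)
          = if cv = 0 then wtf p q K k else 1 := by
        intro cv; rw [if_pos (Or.inl hxk), one_mul]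
      rw [Finset.sum_congr rfl (fun cv _ => this cv), sum_if_zero]
      have hsq : wtf p q K k + ((Fintype.card F : ℝ) - 1) = wtf p q K k * wtf p q K k := by
        have h1 : (wtf p q K k)^2 = wtf p q K k + ((Fintype.card F:ℝ) - 1) := by
          rw [wtf]; split
          · exact la_sq hm
          · exact lb_sq hm
        nlinarith [h1]
      rw [hsq, if_pos hxk]
    · have : ∀ cv : F, (if x k = 0 ∨ cv = 0 then (1:ℝ) else 0) * (if cv = 0 then wtf p q K k else 1)
          = if cv = 0 then wtf p q K k else 0 := by
        intro cv
        by_cases hcv : cv = 0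
        · rw [if_pos hcv, if_pos (Or.inr hcv), if_pos hcv, one_mul]
        · rw [if_neg hcv, if_neg (by tauto), if_neg hcv, zero_mul]
      rw [Finset.sum_congr rfl (fun cv _ => this cv)]
      simp [Finset.sum_ite_eq', if_neg hxk]
  rw [hsplit, hsc, hsd, Finset.prod_congr rfl hsE, Finset.prod_mul_distrib]
  rw [one_mul, ← muf, ← ff]
  ring

lemma adj_iff_W (hn : 2 ≤ n) (v w : ↥(subVerts F n hn)) :
    (zdSubGraph F n hn).Adj v w ↔ v.val.val * w.val.val = 0 := by
  have h : (zdSubGraph F n hn).Adj v w ↔ (zdGraph F n).Adj v.val w.val := Iff.rfl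
  rw [h, adj_iff]

lemma mulvec_apply_W (hn : 2 ≤ n) (u : ↥(subVerts F n hn) → ℝ) (x : ↥(subVerts F n hn)) :
    (((zdSubGraph F n hn).adjMatrix ℝ) *ᵥ u) x
      = ∑ w : ↥(subVerts F n hn), if x.val.val * w.val.val = 0 then u w else 0 := by
  simp only [Matrix.mulVec, dotProduct, SimpleGraph.adjMatrix_apply]
  refine Finset.sum_congr rfl (fun w _ => ?_)
  by_cases h : (zdSubGraph F n hn).Adj x w
  · rw [if_pos h, if_pos ((adj_iff_W hn x w).mp h), one_mul]
  · rw [if_neg h, if_neg (fun hc => h ((adj_iff_W hn x w).mpr hc)), zero_mul]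

lemma W_cases (hn : 2 ≤ n) (c d : Fin n)
    (hcd : (c = (⟨n - 2, by omega⟩ : Fin n) ∧ d = (⟨n - 1, by omega⟩ : Fin n))
      ∨ (c = (⟨n - 1, by omega⟩ : Fin n) ∧ d = (⟨n - 2, by omega⟩ : Fin n)))
    (w : ↥(subVerts F n hn)) :
    (w.val.val c ≠ 0 ∧ w.val.val d = 0) ∨ (w.val.val c = 0 ∧ w.val.val d ≠ 0) := by
  have hW := (mem_subVerts_iff hn w.val).mp w.2
  rw [WP] at hW
  rcases hcd with ⟨hc, hd⟩ | ⟨hc, hd⟩ <;> subst hc <;> subst hd <;> tauto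

lemma side_split (hn : 2 ≤ n) (w : ↥(subVerts F n hn)) (t : ℝ) :
    (if w.val.val ⟨n - 2, by omega⟩ ≠ 0 then t else 0)
      + (if w.val.val ⟨n - 1, by omega⟩ ≠ 0 then t else 0) = t := by
  rcases W_cases hn _ _ (Or.inl ⟨rfl, rfl⟩) w with ⟨h1, h2⟩ | ⟨h1, h2⟩
  · rw [if_pos h1, if_neg (fun hc => hc h2), add_zero]
  · rw [if_neg (fun hc => hc h1), if_pos h2, zero_add]

/-- the side sums of a test function over the subgraph vertex set -/
lemma sum_W_side (hn : 2 ≤ n) (c d : Fin n)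
    (hcd : (c = (⟨n - 2, by omega⟩ : Fin n) ∧ d = (⟨n - 1, by omega⟩ : Fin n))
      ∨ (c = (⟨n - 1, by omega⟩ : Fin n) ∧ d = (⟨n - 2, by omega⟩ : Fin n)))
    (K : Finset (Fin n)) :
    ∑ w : ↥(subVerts F n hn),
        (if w.val.val c ≠ 0
          then ff (la (Fintype.card F)) (lb (Fintype.card F)) (EE n hn) K w.val.val else 0)
      = ((Fintype.card F : ℝ) - 1)
          * (muf (la (Fintype.card F)) (lb (Fintype.card F)) (EE n hn) K
            * muf (la (Fintype.card F)) (lb (Fintype.card F)) (EE n hn) K) := by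
  set p := la (Fintype.card F) with hp
  set q := lb (Fintype.card F) with hq
  have hm : 2 ≤ Fintype.card F := card_ge_two
  have hcdne : c ≠ d := by
    rcases hcd with ⟨hc, hd⟩ | ⟨hc, hd⟩
    · rw [hc, hd]; exact ab_ne hn
    · rw [hc, hd]; exact (ab_ne hn).symm
  have hEcd : EE n hn = univ \ {c, d} := by
    rcases hcd with ⟨hc, hd⟩ | ⟨hc, hd⟩
    · rw [hc, hd, EE]
    · rw [hc, hd, EE, Finset.pair_comm]
  have hmemE : ∀ k : Fin n, k ∈ EE n hn ↔ k ≠ c ∧ k ≠ d := by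
    intro k
    rw [hEcd]
    simp [Finset.mem_sdiff]
  rw [sum_W hn (fun y => if y c ≠ 0 then ff p q (EE n hn) K y else 0)]
  set WW : Fin n → F → ℝ := fun k cv =>
    if k = c then (if cv = 0 then 0 else 1)
    else if k = d then (if cv = 0 then 1 else 0)
    else (if cv = 0 then wtf p q K k else 1) with hWW
  have hpoint : ∀ y : Fin n → F,
      (if ((y ≠ 0 ∧ ∃ z : Fin n → F, z ≠ 0 ∧ y * z = 0) ∧ WP n hn y)
        then (if y c ≠ 0 then ff p q (EE n hn) K y else 0) else 0)
      = ∏ k, WW k (y k) := by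
    intro y
    have hprodsplit : ∏ k, WW k (y k)
        = WW c (y c) * WW d (y d) * ∏ k ∈ EE n hn, WW k (y k) := by
      rw [hEcd, ← Finset.prod_sdiff (Finset.subset_univ ({c, d} : Finset (Fin n))),
        Finset.prod_pair hcdne, mul_comm]
    have hWc : WW c (y c) = if y c = 0 then 0 else 1 := by rw [hWW]; simp
    have hWd : WW d (y d) = if y d = 0 then 1 else 0 := by
      rw [hWW]
      simp [if_neg (Ne.symm hcdne)]
    have hWE : ∀ k ∈ EE n hn, WW k (y k) = (if y k = 0 then wtf p q K k else 1) := by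
      intro k hk
      obtain ⟨hkc, hkd⟩ := (hmemE k).mp hk
      rw [hWW]
      simp only [if_neg hkc, if_neg hkd]
    by_cases hyc : y c = 0
    · have hrhs : ∏ k, WW k (y k) = 0 := by
        rw [hprodsplit, hWc, if_pos hyc]
        ring
      rw [hrhs]
      by_cases houter : ((y ≠ 0 ∧ ∃ z : Fin n → F, z ≠ 0 ∧ y * z = 0) ∧ WP n hn y)
      · rw [if_pos houter, if_neg (fun hc => hc hyc)]
      · rw [if_neg houter]
    · by_cases hyd : y d = 0
      · -- main case
        have hVP : y ≠ 0 ∧ ∃ z : Fin n → F, z ≠ 0 ∧ y * z = 0 := by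
          have hy0 : y ≠ 0 := fun h => hyc (by rw [h]; rfl)
          exact vp_of_coord hy0 hyd
        have hWPy : WP n hn y := by
          rcases hcd with ⟨hc, hd⟩ | ⟨hc, hd⟩
          · left; exact ⟨by rw [← hc]; exact hyc, by rw [← hd]; exact hyd⟩
          · right; exact ⟨by rw [← hd]; exact hyd, by rw [← hc]; exact hyc⟩
        rw [if_pos ⟨hVP, hWPy⟩, if_pos hyc, hprodsplit, hWc, hWd, if_neg hyc, if_pos hyd,
          one_mul, one_mul, Finset.prod_congr rfl hWE, ff]
      · -- both nonzero: WP fails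
        have hrhs : ∏ k, WW k (y k) = 0 := by
          rw [hprodsplit, hWd, if_neg hyd]
          ring
        rw [hrhs]
        have hWPfail : ¬ WP n hn y := by
          intro h
          rcases hcd with ⟨hc, hd⟩ | ⟨hc, hd⟩ <;> rw [hc] at hyc <;> rw [hd] at hyd <;>
            rcases h with ⟨h1, h2⟩ | ⟨h1, h2⟩ <;> tauto
        rw [if_neg (fun hc' => hWPfail hc'.2)]
  rw [Finset.sum_congr rfl (fun y _ => hpoint y), sum_pi_prod WW]
  have hsplit : ∏ k, (∑ cv : F, WW k cv)
      = (∑ cv : F, WW c cv) * (∑ cv : F, WW d cv) * ∏ k ∈ EE n hn, (∑ cv : F, WW k cv) := by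
    rw [hEcd, ← Finset.prod_sdiff (Finset.subset_univ ({c, d} : Finset (Fin n))),
      Finset.prod_pair hcdne, mul_comm]
  have hsc : (∑ cv : F, WW c cv) = (Fintype.card F : ℝ) - 1 := by
    have h0 : ∀ cv : F, WW c cv = if cv = 0 then 0 else 1 := by
      intro cv; rw [hWW]; simp
    rw [Finset.sum_congr rfl (fun cv _ => h0 cv)]
    have h2 : ∀ cv : F, (if cv = 0 then (0:ℝ) else 1) = 1 - (if cv = 0 then 1 else 0) := by
      intro cv; split <;> ring
    rw [Finset.sum_congr rfl (fun cv _ => h2 cv), Finset.sum_sub_distrib]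
    simp [Finset.sum_ite_eq', Finset.card_univ]
  have hsd : (∑ cv : F, WW d cv) = 1 := by
    have h0 : ∀ cv : F, WW d cv = if cv = 0 then 1 else 0 := by
      intro cv; rw [hWW]; simp [if_neg (Ne.symm hcdne)]
    rw [Finset.sum_congr rfl (fun cv _ => h0 cv)]
    simp [Finset.sum_ite_eq']
  have hsE : ∀ k ∈ EE n hn, (∑ cv : F, WW k cv) = wtf p q K k * wtf p q K k := by
    intro k hk
    obtain ⟨hkc, hkd⟩ := (hmemE k).mp hk
    have h0 : ∀ cv : F, WW k cv = if cv = 0 then wtf p q K k else 1 := by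
      intro cv; rw [hWW]; simp only [if_neg hkc, if_neg hkd]
    rw [Finset.sum_congr rfl (fun cv _ => h0 cv), sum_if_zero]
    have h1 : (wtf p q K k)^2 = wtf p q K k + ((Fintype.card F:ℝ) - 1) := by
      rw [wtf]; split
      · exact la_sq hm
      · exact lb_sq hm
    nlinarith [h1]
  rw [hsplit, hsc, hsd, Finset.prod_congr rfl hsE, Finset.prod_mul_distrib, ← muf]
  ring

/-- the eigenvalue identity `(m-1)·μ_{E,K} = -(λ₊^{|K|+1} λ₋^{n-|K|-1})`. -/
lemma eigval_identity (hn : 2 ≤ n) {K : Finset (Fin n)} (hKE : K ⊆ EE n hn) :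
    ((Fintype.card F : ℝ) - 1) * muf (la (Fintype.card F)) (lb (Fintype.card F)) (EE n hn) K
      = -(la (Fintype.card F) ^ (K.card + 1) * lb (Fintype.card F) ^ (n - (K.card + 1))) := by
  set p := la (Fintype.card F) with hp
  set q := lb (Fintype.card F) with hq
  have hm : 2 ≤ Fintype.card F := card_ge_two
  have hKc : K.card ≤ n - 2 := by
    have := Finset.card_le_card hKE
    rwa [card_EE hn] at this
  have hpq : p * q = 1 - (Fintype.card F : ℝ) := la_mul_lb hm
  have hMval : muf p q (EE n hn) K = p ^ K.card * q ^ (n - 2 - K.card) := by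
    rw [muf_eq_pow hKE, card_EE hn]
  have hip : p ^ (K.card + 1) = p ^ K.card * p := pow_succ p K.card
  have hiq : q ^ (n - (K.card + 1)) = q ^ (n - 2 - K.card) * q := by
    rw [← pow_succ]
    congr 1
    omega
  rw [hMval, hip, hiq]
  linear_combination (p ^ K.card * q ^ (n - 2 - K.card)) * hpq

/-- each `-(λ₊^i λ₋^{n-i})` is a main eigenvalue of the subgraph. -/
lemma neg_mem_mainEigs (hn : 2 ≤ n) (i : ℕ) (h1 : 1 ≤ i) (h2 : i ≤ n - 1) :
    -(la (Fintype.card F) ^ i * lb (Fintype.card F) ^ (n - i))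
      ∈ mainEigs (zdSubGraph F n hn) := by
  set p := la (Fintype.card F) with hp
  set q := lb (Fintype.card F) with hq
  have hm : 2 ≤ Fintype.card F := card_ge_two
  obtain ⟨K, hKE, hKcard⟩ := Finset.exists_subset_card_eq
    (show i - 1 ≤ (EE n hn).card by rw [card_EE hn]; omega)
  set M := muf p q (EE n hn) K with hM
  have hMne : M ≠ 0 := muf_ne_zero (la_ne_zero hm) (lb_ne_zero hm) _ _
  have heigval : ((Fintype.card F : ℝ) - 1) * M = -(p ^ i * q ^ (n - i)) := by
    have hId := eigval_identity (F := F) hn hKE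
    have hi : K.card + 1 = i := by omega
    rw [hi] at hId
    rw [hM]
    exact hId
  set u : ↥(subVerts F n hn) → ℝ := fun w => ff p q (EE n hn) K w.val.val with hu
  have hSum : ∑ w : ↥(subVerts F n hn), u w = 2 * (((Fintype.card F : ℝ) - 1) * (M * M)) := by
    have hsplitw : ∀ w : ↥(subVerts F n hn), u w
        = (if w.val.val ⟨n - 2, by omega⟩ ≠ 0 then ff p q (EE n hn) K w.val.val else 0)
          + (if w.val.val ⟨n - 1, by omega⟩ ≠ 0 then ff p q (EE n hn) K w.val.val else 0) :=
      fun w => (side_split hn w _).symm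
    rw [Finset.sum_congr rfl (fun w _ => hsplitw w), Finset.sum_add_distrib,
      sum_W_side hn _ _ (Or.inl ⟨rfl, rfl⟩) K, sum_W_side hn _ _ (Or.inr ⟨rfl, rfl⟩) K]
    ring
  have hcard1 : (1:ℝ) ≤ (Fintype.card F : ℝ) - 1 := by
    have : (2:ℝ) ≤ (Fintype.card F : ℝ) := by exact_mod_cast hm
    linarith
  have hSne : (2 : ℝ) * (((Fintype.card F : ℝ) - 1) * (M * M)) ≠ 0 := by
    have hMM : M * M ≠ 0 := mul_ne_zero hMne hMne
    have hc : ((Fintype.card F : ℝ) - 1) ≠ 0 := by linarith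
    exact mul_ne_zero two_ne_zero (mul_ne_zero hc hMM)
  rw [mainEigs, Set.mem_setOf_eq]
  refine ⟨u, ?_, ?_, ?_⟩
  · intro h
    have h0 : (0:ℝ) = 2 * (((Fintype.card F : ℝ) - 1) * (M * M)) := by
      rw [← hSum, h]
      simp
    exact hSne h0.symm
  · funext x
    rw [mulvec_apply_W hn u x]
    have hcomp : ∑ w : ↥(subVerts F n hn), (if x.val.val * w.val.val = 0 then u w else 0)
        = ((Fintype.card F : ℝ) - 1) * M * ff p q (EE n hn) K x.val.val := by
      rcases W_cases hn _ _ (Or.inl ⟨rfl, rfl⟩) x with ⟨hx1, hx2⟩ | ⟨hx1, hx2⟩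
      · exact master_sum_W hn _ _ (Or.inl ⟨rfl, rfl⟩) K hx1 hx2
      · exact master_sum_W hn _ _ (Or.inr ⟨rfl, rfl⟩) K hx2 hx1
    rw [hcomp, Pi.smul_apply, smul_eq_mul, ← heigval, hu]
  · rw [hSum]
    exact hSne

/-- the scaled completeness identity over `EE` -/
lemma T2_identity (hn : 2 ≤ n) (x : Fin n → F) :
    ∑ K ∈ (EE n hn).powerset,
        ((∏ _k ∈ K, la (Fintype.card F)) * ∏ _k ∈ (EE n hn) \ K, (-(lb (Fintype.card F))))
          * ff (la (Fintype.card F)) (lb (Fintype.card F)) (EE n hn) K x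
      = (rr (Fintype.card F)) ^ (n - 2) := by
  set p := la (Fintype.card F) with hp
  set q := lb (Fintype.card F) with hq
  set s := rr (Fintype.card F) with hs
  have hm : 2 ≤ Fintype.card F := card_ge_two
  have hterm : ∀ K ∈ (EE n hn).powerset,
      ((∏ _k ∈ K, p) * ∏ _k ∈ (EE n hn) \ K, (-q)) * ff p q (EE n hn) K x
        = (∏ k ∈ K, (p * (if x k = 0 then p else 1)))
          * ∏ k ∈ (EE n hn) \ K, ((-q) * (if x k = 0 then q else 1)) := by
    intro K hK
    have hKE : K ⊆ EE n hn := Finset.mem_powerset.mp hK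
    have hffsplit : ff p q (EE n hn) K x
        = (∏ k ∈ K, (if x k = 0 then p else 1)) * ∏ k ∈ (EE n hn) \ K, (if x k = 0 then q else 1) := by
      rw [ff, ← Finset.prod_sdiff hKE, mul_comm]
      congr 1
      · exact Finset.prod_congr rfl (fun k hk => by rw [wtf, if_pos hk])
      · exact Finset.prod_congr rfl (fun k hk => by rw [wtf, if_neg (Finset.mem_sdiff.mp hk).2])
    rw [hffsplit, mul_mul_mul_comm, ← Finset.prod_mul_distrib, ← Finset.prod_mul_distrib]
  rw [Finset.sum_congr rfl hterm, ← Finset.prod_add]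
  have h1 : p + q = 1 := la_add_lb
  have h2 : p - q = s := la_sub_lb
  have hper : ∀ k ∈ EE n hn, (p * (if x k = 0 then p else 1)) + ((-q) * (if x k = 0 then q else 1)) = s := by
    intro k _
    by_cases hxk : x k = 0
    · rw [if_pos hxk, if_pos hxk]
      linear_combination (p - q) * h1 + h2
    · rw [if_neg hxk, if_neg hxk]
      linear_combination h2
  rw [Finset.prod_congr rfl hper, Finset.prod_const, card_EE hn]

/-- the key pairing identity on the subgraph -/
lemma pair_W (hn : 2 ≤ n) (c d : Fin n)
    (hcd : (c = (⟨n - 2, by omega⟩ : Fin n) ∧ d = (⟨n - 1, by omega⟩ : Fin n))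
      ∨ (c = (⟨n - 1, by omega⟩ : Fin n) ∧ d = (⟨n - 2, by omega⟩ : Fin n)))
    (K : Finset (Fin n)) (u : ↥(subVerts F n hn) → ℝ) (μ' : ℝ)
    (hueq : ((zdSubGraph F n hn).adjMatrix ℝ) *ᵥ u = μ' • u) :
    μ' * (∑ w : ↥(subVerts F n hn),
        if w.val.val c ≠ 0
          then ff (la (Fintype.card F)) (lb (Fintype.card F)) (EE n hn) K w.val.val * u w else 0)
      = ((Fintype.card F : ℝ) - 1)
          * muf (la (Fintype.card F)) (lb (Fintype.card F)) (EE n hn) K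
          * (∑ w : ↥(subVerts F n hn),
              if w.val.val d ≠ 0
                then ff (la (Fintype.card F)) (lb (Fintype.card F)) (EE n hn) K w.val.val * u w
                else 0) := by
  set p := la (Fintype.card F) with hp
  set q := lb (Fintype.card F) with hq
  have hm : 2 ≤ Fintype.card F := card_ge_two
  have hcdflip : (d = (⟨n - 2, by omega⟩ : Fin n) ∧ c = (⟨n - 1, by omega⟩ : Fin n))
      ∨ (d = (⟨n - 1, by omega⟩ : Fin n) ∧ c = (⟨n - 2, by omega⟩ : Fin n)) := by
    rcases hcd with ⟨h1, h2⟩ | ⟨h1, h2⟩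
    · exact Or.inr ⟨h2, h1⟩
    · exact Or.inl ⟨h2, h1⟩
  -- way 1
  have hway1 : ∑ w : ↥(subVerts F n hn),
      (if w.val.val c ≠ 0
        then ff p q (EE n hn) K w.val.val * ((((zdSubGraph F n hn).adjMatrix ℝ) *ᵥ u) w) else 0)
      = μ' * (∑ w : ↥(subVerts F n hn),
          if w.val.val c ≠ 0 then ff p q (EE n hn) K w.val.val * u w else 0) := by
    rw [Finset.mul_sum]
    refine Finset.sum_congr rfl (fun w _ => ?_)
    have hA : (((zdSubGraph F n hn).adjMatrix ℝ) *ᵥ u) w = μ' * u w := by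
      rw [hueq]; simp
    rw [hA]
    split <;> ring
  -- way 2
  have hway2 : ∑ w : ↥(subVerts F n hn),
      (if w.val.val c ≠ 0
        then ff p q (EE n hn) K w.val.val * ((((zdSubGraph F n hn).adjMatrix ℝ) *ᵥ u) w) else 0)
      = ((Fintype.card F : ℝ) - 1) * muf p q (EE n hn) K
          * (∑ y : ↥(subVerts F n hn),
              if y.val.val d ≠ 0 then ff p q (EE n hn) K y.val.val * u y else 0) := by
    have hstep : ∀ w : ↥(subVerts F n hn),
        (if w.val.val c ≠ 0
          then ff p q (EE n hn) K w.val.val * ((((zdSubGraph F n hn).adjMatrix ℝ) *ᵥ u) w) else 0)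
        = ∑ y : ↥(subVerts F n hn),
            (if (w.val.val c ≠ 0 ∧ w.val.val * y.val.val = 0)
              then ff p q (EE n hn) K w.val.val * u y else 0) := by
      intro w
      by_cases hc : w.val.val c ≠ 0
      · rw [if_pos hc, mulvec_apply_W hn u w, Finset.mul_sum]
        refine Finset.sum_congr rfl (fun y _ => ?_)
        by_cases hw : w.val.val * y.val.val = 0
        · rw [if_pos hw, if_pos ⟨hc, hw⟩]
        · rw [if_neg hw, if_neg (fun hcc => hw hcc.2), mul_zero]
      · rw [if_neg hc]
        symm
        apply Finset.sum_eq_zero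
        intro y _
        rw [if_neg (fun hcc => hc hcc.1)]
    rw [Finset.sum_congr rfl (fun w _ => hstep w), Finset.sum_comm]
    have hinner : ∀ y : ↥(subVerts F n hn),
        ∑ w : ↥(subVerts F n hn),
          (if (w.val.val c ≠ 0 ∧ w.val.val * y.val.val = 0)
            then ff p q (EE n hn) K w.val.val * u y else 0)
        = (if y.val.val d ≠ 0
            then ((Fintype.card F : ℝ) - 1) * muf p q (EE n hn) K * ff p q (EE n hn) K y.val.val
            else 0) * u y := by
      intro y
      have hpull : ∀ w : ↥(subVerts F n hn),
          (if (w.val.val c ≠ 0 ∧ w.val.val * y.val.val = 0)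
            then ff p q (EE n hn) K w.val.val * u y else 0)
          = (if (w.val.val c ≠ 0 ∧ w.val.val * y.val.val = 0)
              then ff p q (EE n hn) K w.val.val else 0) * u y := by
        intro w
        split
        · rfl
        · rw [zero_mul]
      rw [Finset.sum_congr rfl (fun w _ => hpull w), ← Finset.sum_mul]
      congr 1
      by_cases hyd : y.val.val d ≠ 0
      · have hyc : y.val.val c = 0 := by
          rcases W_cases hn c d hcd y with ⟨h1, h2⟩ | ⟨h1, h2⟩
          · exact absurd h2 hyd
          · exact h1
        rw [if_pos hyd]
        have hred : ∀ w : ↥(subVerts F n hn),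
            (if (w.val.val c ≠ 0 ∧ w.val.val * y.val.val = 0)
              then ff p q (EE n hn) K w.val.val else 0)
            = (if y.val.val * w.val.val = 0 then ff p q (EE n hn) K w.val.val else 0) := by
          intro w
          by_cases hw : w.val.val * y.val.val = 0
          · have hwd : w.val.val d = 0 := by
              rcases (mul_eq_zero_iff_pi _ _).mp hw d with h | h
              · exact h
              · exact absurd h hyd
            have hwc : w.val.val c ≠ 0 := by
              rcases W_cases hn c d hcd w with ⟨h1, h2⟩ | ⟨h1, h2⟩
              · exact h1
              · exact absurd hwd h2
            rw [if_pos ⟨hwc, hw⟩, if_pos (by rwa [mul_comm] at hw)]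
          · rw [if_neg (fun hcc => hw hcc.2),
              if_neg (fun hcc => hw (by rwa [mul_comm] at hcc))]
        rw [Finset.sum_congr rfl (fun w _ => hred w)]
        exact master_sum_W hn d c hcdflip K hyd hyc
      · rw [if_neg hyd]
        push_neg at hyd
        have hyc : y.val.val c ≠ 0 := by
          rcases W_cases hn c d hcd y with ⟨h1, h2⟩ | ⟨h1, h2⟩
          · exact h1
          · exact absurd hyd h2
        apply Finset.sum_eq_zero
        intro w _
        rw [if_neg]
        rintro ⟨hwc, hw⟩
        rcases (mul_eq_zero_iff_pi _ _).mp hw c with h | h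
        · exact hwc h
        · exact hyc h
    rw [Finset.sum_congr rfl (fun y _ => hinner y), Finset.mul_sum]
    refine Finset.sum_congr rfl (fun y _ => ?_)
    split <;> ring
  rw [← hway1, hway2]

/-- classification of the main eigenvalues of the subgraph -/
lemma main_eig_classify (hn : 2 ≤ n) (μ' : ℝ) (hmem : μ' ∈ mainEigs (zdSubGraph F n hn)) :
    ∃ i : ℕ, 1 ≤ i ∧ i ≤ n - 1
      ∧ μ' = -(la (Fintype.card F) ^ i * lb (Fintype.card F) ^ (n - i)) := by
  have ha : n - 2 < n := by omega
  have hb : n - 1 < n := by omega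
  rw [mainEigs, Set.mem_setOf_eq] at hmem
  obtain ⟨u, hu0, hueq, husum⟩ := hmem
  by_contra hnot
  push_neg at hnot
  set p := la (Fintype.card F) with hp
  set q := lb (Fintype.card F) with hq
  set s := rr (Fintype.card F) with hs
  have hm : 2 ≤ Fintype.card F := card_ge_two
  have hKey : ∀ K ∈ (EE n hn).powerset,
      (∑ w : ↥(subVerts F n hn),
        if w.val.val ⟨n - 2, ha⟩ ≠ 0 then ff p q (EE n hn) K w.val.val * u w else 0)
      + (∑ w : ↥(subVerts F n hn),
        if w.val.val ⟨n - 1, hb⟩ ≠ 0 then ff p q (EE n hn) K w.val.val * u w else 0) = 0 := by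
    intro K hK
    have hKE : K ⊆ EE n hn := Finset.mem_powerset.mp hK
    have e1 := pair_W hn (⟨n - 2, ha⟩ : Fin n) (⟨n - 1, hb⟩ : Fin n) (Or.inl ⟨rfl, rfl⟩) K u μ' hueq
    have e2 := pair_W hn (⟨n - 1, hb⟩ : Fin n) (⟨n - 2, ha⟩ : Fin n) (Or.inr ⟨rfl, rfl⟩) K u μ' hueq
    have hKc : K.card ≤ n - 2 := by
      have := Finset.card_le_card hKE
      rwa [card_EE hn] at this
    have hμne : μ' ≠ ((Fintype.card F : ℝ) - 1) * muf p q (EE n hn) K := by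
      intro h
      apply hnot (K.card + 1) (by omega) (by omega)
      rw [h, eigval_identity (F := F) hn hKE]
    have hz : (μ' - ((Fintype.card F : ℝ) - 1) * muf p q (EE n hn) K)
        * ((∑ w : ↥(subVerts F n hn),
            if w.val.val ⟨n - 2, ha⟩ ≠ 0 then ff p q (EE n hn) K w.val.val * u w else 0)
          + (∑ w : ↥(subVerts F n hn),
            if w.val.val ⟨n - 1, hb⟩ ≠ 0 then ff p q (EE n hn) K w.val.val * u w else 0)) = 0 := by
      linear_combination e1 + e2
    exact (mul_eq_zero.mp hz).resolve_left (sub_ne_zero.mpr hμne)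
  have hGsum : ∀ K : Finset (Fin n),
      (∑ w : ↥(subVerts F n hn),
        if w.val.val ⟨n - 2, ha⟩ ≠ 0 then ff p q (EE n hn) K w.val.val * u w else 0)
      + (∑ w : ↥(subVerts F n hn),
        if w.val.val ⟨n - 1, hb⟩ ≠ 0 then ff p q (EE n hn) K w.val.val * u w else 0)
      = ∑ w : ↥(subVerts F n hn), ff p q (EE n hn) K w.val.val * u w := by
    intro K
    rw [← Finset.sum_add_distrib]
    exact Finset.sum_congr rfl (fun w _ => side_split hn w _)
  have hL : ∑ K ∈ (EE n hn).powerset,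
      ((∏ _k ∈ K, p) * ∏ _k ∈ (EE n hn) \ K, (-q))
        * (∑ w : ↥(subVerts F n hn), ff p q (EE n hn) K w.val.val * u w)
      = s ^ (n - 2) * (∑ w : ↥(subVerts F n hn), u w) := by
    have h1 : ∀ K ∈ (EE n hn).powerset,
        ((∏ _k ∈ K, p) * ∏ _k ∈ (EE n hn) \ K, (-q))
          * (∑ w : ↥(subVerts F n hn), ff p q (EE n hn) K w.val.val * u w)
        = ∑ w : ↥(subVerts F n hn),
            (((∏ _k ∈ K, p) * ∏ _k ∈ (EE n hn) \ K, (-q)) * ff p q (EE n hn) K w.val.val) * u w := by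
      intro K _
      rw [Finset.mul_sum]
      exact Finset.sum_congr rfl (fun w _ => by ring)
    rw [Finset.sum_congr rfl h1, Finset.sum_comm]
    have h2 : ∀ w : ↥(subVerts F n hn),
        ∑ K ∈ (EE n hn).powerset,
          (((∏ _k ∈ K, p) * ∏ _k ∈ (EE n hn) \ K, (-q)) * ff p q (EE n hn) K w.val.val) * u w
        = s ^ (n - 2) * u w := by
      intro w
      rw [← Finset.sum_mul, T2_identity hn w.val.val]
    rw [Finset.sum_congr rfl (fun w _ => h2 w), ← Finset.mul_sum]
  have hR : ∑ K ∈ (EE n hn).powerset,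
      ((∏ _k ∈ K, p) * ∏ _k ∈ (EE n hn) \ K, (-q))
        * (∑ w : ↥(subVerts F n hn), ff p q (EE n hn) K w.val.val * u w) = 0 := by
    apply Finset.sum_eq_zero
    intro K hK
    rw [← hGsum K, hKey K hK, mul_zero]
  have hfinal : s ^ (n - 2) * (∑ w : ↥(subVerts F n hn), u w) = 0 := by
    rw [← hL, hR]
  exact husum ((mul_eq_zero.mp hfinal).resolve_left (pow_ne_zero _ (rr_ne_zero hm)))

end ZDP

/-- The nonzero non-main eigenvalues of `Γ(R_n)` are precisely the negatives of the main
eigenvalues of `Γ'(R_n)`. -/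
theorem zdGraph_nonmain_eq_neg_mainEigs_sub (F : Type) [Field F] [Fintype F] (m n : ℕ)
    (hm : Fintype.card F = m) (hn : 2 ≤ n) :
    {μ : ℝ | μ ≠ 0 ∧
        (∃ v : zdVertex F n → ℝ, v ≠ 0 ∧ ((zdGraph F n).adjMatrix ℝ) *ᵥ v = μ • v) ∧
        (∀ v : zdVertex F n → ℝ, ((zdGraph F n).adjMatrix ℝ) *ᵥ v = μ • v → ∑ i, v i = 0)}
      = (fun μ : ℝ => -μ) '' mainEigs (zdSubGraph F n hn) := by
  subst hm
  ext μ
  simp only [Set.mem_setOf_eq, Set.mem_image]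
  constructor
  · rintro ⟨hμ0, ⟨v, hv0, hveq⟩, hall⟩
    obtain ⟨i, h1, h2, heq⟩ := ZDP.eig_classify hn μ hμ0 v hv0 hveq (hall v hveq)
    refine ⟨-μ, ?_, by ring⟩
    rw [heq]
    exact ZDP.neg_mem_mainEigs hn i h1 h2
  · rintro ⟨μ'', hmain, rfl⟩
    obtain ⟨i, h1, h2, heq⟩ := ZDP.main_eig_classify hn μ'' hmain
    have hμval : -μ'' = ZDP.la (Fintype.card F) ^ i * ZDP.lb (Fintype.card F) ^ (n - i) := by
      rw [heq]; ring
    have hm2 : 2 ≤ Fintype.card F := ZDP.card_ge_two (F := F)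
    refine ⟨?_, ?_, ?_⟩
    · rw [hμval]
      exact mul_ne_zero (pow_ne_zero _ (ZDP.la_ne_zero hm2)) (pow_ne_zero _ (ZDP.lb_ne_zero hm2))
    · rw [hμval]
      exact ZDP.exists_eigvec hn i h1 h2
    · intro v hveq
      rw [hμval] at hveq
      exact ZDP.eig_sum_zero i h1 (by omega) v hveq
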